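/- For any μ_0, …, μ_d ∈ K there exists a K-algebra automorphism ψ of R such that ψ ∘ (δ + Σ_{k=0}^d μ_k ∂_k) ∘ ψ^{−1} = δ + μ_d ∂_d and ψ ∘ ∂_0 ∘ ψ^{−1} = ∂_0 (equalities of K-linear maps from R to R). -/

import Mathlib

open MvPolynomial Finset

/-- The derivation `δ = (∏_{j=3}^m x_j^{α_{j1}}) ∂/∂x_1` of `K[x_1, …, x_m]`
(variables are indexed by `Fin m`, so `x_1` is `X ⟨0,_⟩`, `x_2` is `X ⟨1,_⟩`, and the
indices `3 ≤ j ≤ m` are those `j : Fin m` with `2 ≤ j.val`). -/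
noncomputable def deltaD (K : Type*) [Field K] (m : ℕ) (hm : 2 ≤ m) (α1 : Fin m → ℕ) :
    Derivation K (MvPolynomial (Fin m) K) (MvPolynomial (Fin m) K) :=
  (∏ j ∈ Finset.univ.filter (fun j : Fin m => 2 ≤ j.val),
      (X j : MvPolynomial (Fin m) K) ^ α1 j) • pderiv (⟨0, by omega⟩ : Fin m)

/-- The derivation `∂_k = x_1^k (∏_{j=3}^m x_j^{α_{j2} - k α_{j1}}) ∂/∂x_2`. -/
noncomputable def partialD (K : Type*) [Field K] (m : ℕ) (hm : 2 ≤ m)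
    (α1 α2 : Fin m → ℕ) (k : ℕ) :
    Derivation K (MvPolynomial (Fin m) K) (MvPolynomial (Fin m) K) :=
  ((X (⟨0, by omega⟩ : Fin m) : MvPolynomial (Fin m) K) ^ k *
      ∏ j ∈ Finset.univ.filter (fun j : Fin m => 2 ≤ j.val),
        (X j : MvPolynomial (Fin m) K) ^ (α2 j - k * α1 j)) •
    pderiv (⟨1, by omega⟩ : Fin m)

section Aux

variable {K : Type*} [Field K] {m : ℕ}

private lemma Derivation.sum_apply' {ι : Type*} (s : Finset ι)
    (D : ι → Derivation K (MvPolynomial (Fin m) K) (MvPolynomial (Fin m) K))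
    (a : MvPolynomial (Fin m) K) :
    (∑ k ∈ s, D k) a = ∑ k ∈ s, D k a := by
  classical
  induction s using Finset.induction_on with
  | empty => simp
  | insert _ _ h ih => simp [Finset.sum_insert h, Derivation.add_apply, ih]

private lemma pderiv_prodpow (i : Fin m) (s : Finset (Fin m)) (e : Fin m → ℕ)
    (h : i ∉ s) :
    pderiv i (∏ j ∈ s, (X j : MvPolynomial (Fin m) K) ^ e j) = 0 := by
  refine Finset.prod_induction _ (fun q => pderiv i q = 0) (fun a b ha hb => ?_)
    pderiv_one (fun j hj => ?_)
  · show pderiv i (a * b) = 0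
    rw [pderiv_mul, ha, hb]; ring
  · show pderiv i (X j ^ e j) = 0
    rw [pderiv_pow, pderiv_X_of_ne (fun hji => h (by rw [← hji]; exact hj))]; ring

private lemma aeval_prodpow (σf : Fin m → MvPolynomial (Fin m) K)
    (s : Finset (Fin m)) (e : Fin m → ℕ) (h : ∀ j ∈ s, σf j = X j) :
    aeval σf (∏ j ∈ s, (X j : MvPolynomial (Fin m) K) ^ e j)
      = ∏ j ∈ s, (X j : MvPolynomial (Fin m) K) ^ e j := by
  rw [map_prod]
  exact Finset.prod_congr rfl fun j hj => by rw [map_pow, aeval_X, h j hj]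

private noncomputable def conjDer {A : Type*} [CommRing A] [Algebra K A]
    (e : A ≃ₐ[K] A) (D : Derivation K A A) : Derivation K A A where
  toLinearMap := e.toLinearMap ∘ₗ D.toLinearMap ∘ₗ e.symm.toLinearMap
  map_one_eq_zero' := by simp
  leibniz' a b := by
    simp only [LinearMap.coe_comp, Function.comp_apply, AlgEquiv.toLinearMap_apply,
      map_mul, Derivation.coeFn_coe, Derivation.leibniz, smul_eq_mul, map_add,
      AlgEquiv.apply_symm_apply]

private lemma conj_eq {e : MvPolynomial (Fin m) K ≃ₐ[K] MvPolynomial (Fin m) K}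
    {D₁ D₂ : Derivation K (MvPolynomial (Fin m) K) (MvPolynomial (Fin m) K)}
    (h : ∀ i, e (D₁ (e.symm (X i))) = D₂ (X i)) :
    ∀ f, e (D₁ (e.symm f)) = D₂ f := by
  intro f
  have hh : conjDer e D₁ = D₂ := derivation_ext h
  calc e (D₁ (e.symm f)) = conjDer e D₁ f := rfl
    _ = D₂ f := by rw [hh]

private noncomputable def shear (v : Fin m) (p : MvPolynomial (Fin m) K)
    (hplus : aeval (fun i => if i = v then X v + p else X i) p = p)
    (hminus : aeval (fun i => if i = v then X v - p else X i) p = p) :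
    MvPolynomial (Fin m) K ≃ₐ[K] MvPolynomial (Fin m) K :=
  AlgEquiv.ofAlgHom (aeval fun i => if i = v then X v + p else X i)
    (aeval fun i => if i = v then X v - p else X i)
    (by
      apply algHom_ext; intro i
      by_cases hi : i = v
      · subst hi
        simp only [AlgHom.comp_apply, aeval_X, if_pos rfl, if_true, eq_self_iff_true,
          map_sub, map_add, hminus, hplus, AlgHom.id_apply]
        ring
      · simp [AlgHom.comp_apply, aeval_X, if_neg hi])
    (by
      apply algHom_ext; intro i
      by_cases hi : i = v
      · subst hi
        simp only [AlgHom.comp_apply, aeval_X, if_pos rfl, if_true, eq_self_iff_true,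
          map_add, map_sub, hplus, hminus, AlgHom.id_apply]
        ring
      · simp [AlgHom.comp_apply, aeval_X, if_neg hi])

private lemma shear_apply (v : Fin m) (p : MvPolynomial (Fin m) K)
    (hplus : aeval (fun i => if i = v then X v + p else X i) p = p)
    (hminus : aeval (fun i => if i = v then X v - p else X i) p = p) (q) :
    shear v p hplus hminus q = aeval (fun i => if i = v then X v + p else X i) q := rfl

private lemma shear_symm_apply (v : Fin m) (p : MvPolynomial (Fin m) K)
    (hplus : aeval (fun i => if i = v then X v + p else X i) p = p)
    (hminus : aeval (fun i => if i = v then X v - p else X i) p = p) (q) :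
    (shear v p hplus hminus).symm q = aeval (fun i => if i = v then X v - p else X i) q := rfl

end Aux

private noncomputable def deltaA (K : Type*) [Field K] {m : ℕ} (x0 : Fin m)
    (S : Finset (Fin m)) (α1 : Fin m → ℕ) :
    Derivation K (MvPolynomial (Fin m) K) (MvPolynomial (Fin m) K) :=
  (∏ j ∈ S, (X j : MvPolynomial (Fin m) K) ^ α1 j) • pderiv x0

private noncomputable def partialA (K : Type*) [Field K] {m : ℕ} (x0 x1 : Fin m)
    (S : Finset (Fin m)) (α1 α2 : Fin m → ℕ) (k : ℕ) :
    Derivation K (MvPolynomial (Fin m) K) (MvPolynomial (Fin m) K) :=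
  (X x0 ^ k * (∏ j ∈ S, (X j : MvPolynomial (Fin m) K) ^ (α2 j - k * α1 j))) • pderiv x1

private lemma deltaA_apply (K : Type*) [Field K] {m : ℕ} (x0 : Fin m)
    (S : Finset (Fin m)) (α1 : Fin m → ℕ) (f : MvPolynomial (Fin m) K) :
    deltaA K x0 S α1 f = (∏ j ∈ S, (X j : MvPolynomial (Fin m) K) ^ α1 j) * pderiv x0 f := by
  rw [deltaA, Derivation.smul_apply, smul_eq_mul]

private lemma partialA_apply (K : Type*) [Field K] {m : ℕ} (x0 x1 : Fin m)
    (S : Finset (Fin m)) (α1 α2 : Fin m → ℕ) (k : ℕ) (f : MvPolynomial (Fin m) K) :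
    partialA K x0 x1 S α1 α2 k f = (X x0 ^ k * (∏ j ∈ S, (X j : MvPolynomial (Fin m) K) ^ (α2 j - k * α1 j))) * pderiv x1 f := by
  rw [partialA, Derivation.smul_apply, smul_eq_mul]

private theorem main_aux {K : Type*} [Field K] [CharZero K] {m : ℕ}
    (x0 x1 : Fin m) (hx : x0 ≠ x1) (S : Finset (Fin m)) (hS0 : x0 ∉ S) (hS1 : x1 ∉ S)
    (α1 α2 : Fin m → ℕ) (d : ℕ) (hd : 1 ≤ d) (hα : ∀ j ∈ S, d * α1 j ≤ α2 j) (μ : ℕ → K) :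
    ∃ ψ : MvPolynomial (Fin m) K ≃ₐ[K] MvPolynomial (Fin m) K,
      (∀ f : MvPolynomial (Fin m) K,
        ψ ((deltaA K x0 S α1 + ∑ k ∈ Finset.range (d + 1), μ k • partialA K x0 x1 S α1 α2 k)
            (ψ.symm f)) =
          (deltaA K x0 S α1 + μ d • partialA K x0 x1 S α1 α2 d) f) ∧
      (∀ f : MvPolynomial (Fin m) K,
        ψ (partialA K x0 x1 S α1 α2 0 (ψ.symm f)) = partialA K x0 x1 S α1 α2 0 f) := by
  classical
  set p : MvPolynomial (Fin m) K := ∑ k ∈ Finset.range d, (((k + 1 : ℕ) : K)⁻¹ * μ k) • (X x0 ^ (k + 1) * (∏ j ∈ S, (X j : MvPolynomial (Fin m) K) ^ α1 j) ^ (d - 1 - k) * (∏ j ∈ S, (X j : MvPolynomial (Fin m) K) ^ (α2 j - d * α1 j))) with hpdef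
  have hSne1 : ∀ j ∈ S, j ≠ x1 := fun j hj e => hS1 (e ▸ hj)
  have hP0 : pderiv x0 (∏ j ∈ S, (X j : MvPolynomial (Fin m) K) ^ α1 j) = 0 := pderiv_prodpow x0 S _ hS0
  have hP1 : pderiv x1 (∏ j ∈ S, (X j : MvPolynomial (Fin m) K) ^ α1 j) = 0 := pderiv_prodpow x1 S _ hS1
  have hQ0 : ∀ c : ℕ, pderiv x0 (∏ j ∈ S, (X j : MvPolynomial (Fin m) K) ^ (α2 j - c * α1 j)) = 0 := fun c => pderiv_prodpow x0 S _ hS0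
  have hQ1 : ∀ c : ℕ, pderiv x1 (∏ j ∈ S, (X j : MvPolynomial (Fin m) K) ^ (α2 j - c * α1 j)) = 0 := fun c => pderiv_prodpow x1 S _ hS1
  have hfixp : ∀ σf : Fin m → MvPolynomial (Fin m) K, (∀ j, j ≠ x1 → σf j = X j) →
      aeval σf p = p := by
    intro σf h
    have hSne : ∀ j ∈ S, σf j = X j := fun j hj => h j (hSne1 j hj)
    rw [hpdef, map_sum]
    refine Finset.sum_congr rfl fun k hk => ?_
    rw [map_smul, map_mul, map_mul, map_pow, aeval_X, h x0 hx, map_pow,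
      aeval_prodpow σf S _ hSne, aeval_prodpow σf S _ hSne]
  have hfplus : aeval (fun i => if i = x1 then X x1 + p else X i) p = p := hfixp _ (fun j hj => if_neg hj)
  have hfminus : aeval (fun i => if i = x1 then X x1 - p else X i) p = p :=
    hfixp _ (fun j hj => if_neg hj)
  have hpx1 : pderiv x1 p = 0 := by
    rw [hpdef, map_sum]
    refine Finset.sum_eq_zero fun k hk => ?_
    rw [Derivation.map_smul, pderiv_mul, pderiv_mul, pderiv_pow, pderiv_pow,
      pderiv_X_of_ne hx, hP1, hQ1 d]
    simp
  have hpx0 : pderiv x0 p = ∑ k ∈ Finset.range d, μ k • (X x0 ^ k * (∏ j ∈ S, (X j : MvPolynomial (Fin m) K) ^ α1 j) ^ (d - 1 - k) * (∏ j ∈ S, (X j : MvPolynomial (Fin m) K) ^ (α2 j - d * α1 j))) := by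
    rw [hpdef, map_sum]
    refine Finset.sum_congr rfl fun k hk => ?_
    rw [Derivation.map_smul]
    have hne : ((k + 1 : ℕ) : K) ≠ 0 := Nat.cast_ne_zero.mpr (Nat.succ_ne_zero k)
    have ht : pderiv x0 (X x0 ^ (k + 1) * (∏ j ∈ S, (X j : MvPolynomial (Fin m) K) ^ α1 j) ^ (d - 1 - k) * (∏ j ∈ S, (X j : MvPolynomial (Fin m) K) ^ (α2 j - d * α1 j)))
        = ((k + 1 : ℕ) : MvPolynomial (Fin m) K)
            * (X x0 ^ k * (∏ j ∈ S, (X j : MvPolynomial (Fin m) K) ^ α1 j) ^ (d - 1 - k) * (∏ j ∈ S, (X j : MvPolynomial (Fin m) K) ^ (α2 j - d * α1 j))) := by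
      simp only [pderiv_mul, pderiv_pow, pderiv_X_self, hP0, hQ0 d, Nat.add_sub_cancel,
        mul_one, mul_zero, zero_mul, add_zero, zero_add]
      ring
    rw [ht, smul_eq_C_mul, smul_eq_C_mul,
      ← map_natCast (C : K →+* MvPolynomial (Fin m) K) (k + 1), ← mul_assoc, ← map_mul,
      mul_right_comm, inv_mul_cancel₀ hne, one_mul]
  have hQfact : ∀ k : ℕ, k ≤ d → (∏ j ∈ S, (X j : MvPolynomial (Fin m) K) ^ (α2 j - k * α1 j)) = (∏ j ∈ S, (X j : MvPolynomial (Fin m) K) ^ α1 j) ^ (d - k) * (∏ j ∈ S, (X j : MvPolynomial (Fin m) K) ^ (α2 j - d * α1 j)) := by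
    intro k hk
    rw [← Finset.prod_pow, ← Finset.prod_mul_distrib]
    refine Finset.prod_congr rfl fun j hj => ?_
    rw [← pow_mul, ← pow_add]
    congr 1
    have h3 : α1 j * (d - k) = d * α1 j - k * α1 j := by
      rw [mul_comm, Nat.sub_mul]
    have h4 := hα j hj
    have h5 : k * α1 j ≤ d * α1 j := Nat.mul_le_mul_right _ hk
    omega
  have hkey : (∑ k ∈ Finset.range (d + 1), μ k • (X x0 ^ k * (∏ j ∈ S, (X j : MvPolynomial (Fin m) K) ^ (α2 j - k * α1 j))))
      - (∏ j ∈ S, (X j : MvPolynomial (Fin m) K) ^ α1 j) * (∑ k ∈ Finset.range d, μ k • (X x0 ^ k * (∏ j ∈ S, (X j : MvPolynomial (Fin m) K) ^ α1 j) ^ (d - 1 - k) * (∏ j ∈ S, (X j : MvPolynomial (Fin m) K) ^ (α2 j - d * α1 j)))) = μ d • (X x0 ^ d * (∏ j ∈ S, (X j : MvPolynomial (Fin m) K) ^ (α2 j - d * α1 j))) := by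
    rw [Finset.sum_range_succ, Finset.mul_sum]
    have h1 : ∀ k ∈ Finset.range d,
        μ k • (X x0 ^ k * (∏ j ∈ S, (X j : MvPolynomial (Fin m) K) ^ (α2 j - k * α1 j)))
          = (∏ j ∈ S, (X j : MvPolynomial (Fin m) K) ^ α1 j) * (μ k • (X x0 ^ k * (∏ j ∈ S, (X j : MvPolynomial (Fin m) K) ^ α1 j) ^ (d - 1 - k) * (∏ j ∈ S, (X j : MvPolynomial (Fin m) K) ^ (α2 j - d * α1 j)))) := by
      intro k hk
      have hkd := Finset.mem_range.mp hk
      rw [hQfact k (Nat.le_of_lt hkd), mul_smul_comm]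
      congr 1
      have hdk : d - k = (d - 1 - k) + 1 := by omega
      rw [hdk, pow_succ]
      ring
    rw [Finset.sum_congr rfl h1, add_sub_cancel_left]
  have hsymm : ∀ i, (shear x1 p hfplus hfminus).symm (X i)
      = if i = x1 then X x1 - p else X i := fun i => by rw [shear_symm_apply, aeval_X]
  have hap : ∀ q, shear x1 p hfplus hfminus q = aeval (fun i => if i = x1 then X x1 + p else X i) q :=
    shear_apply x1 p hfplus hfminus
  have haX0 : aeval (fun i => if i = x1 then X x1 + p else X i) (X x0 : MvPolynomial (Fin m) K) = X x0 := by
    rw [aeval_X]; exact if_neg hx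
  have haP : aeval (fun i => if i = x1 then X x1 + p else X i) (∏ j ∈ S, (X j : MvPolynomial (Fin m) K) ^ α1 j) = (∏ j ∈ S, (X j : MvPolynomial (Fin m) K) ^ α1 j) :=
    aeval_prodpow _ S _ (fun j hj => if_neg (hSne1 j hj))
  have haQ : ∀ c : ℕ, aeval (fun i => if i = x1 then X x1 + p else X i) (∏ j ∈ S, (X j : MvPolynomial (Fin m) K) ^ (α2 j - c * α1 j)) = (∏ j ∈ S, (X j : MvPolynomial (Fin m) K) ^ (α2 j - c * α1 j)) :=
    fun c => aeval_prodpow _ S _ (fun j hj => if_neg (hSne1 j hj))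
  refine ⟨shear x1 p hfplus hfminus, conj_eq (fun i => ?_), conj_eq (fun i => ?_)⟩
  · -- the main conjugation identity, checked on the variable X i
    by_cases hi : i = x1
    · rw [hi, hsymm x1]
      simp only [eq_self_iff_true, if_true]
      simp only [Derivation.add_apply, Derivation.sum_apply', Derivation.smul_apply,
        deltaA_apply, partialA_apply]
      rw [Derivation.map_sub, Derivation.map_sub, pderiv_X_of_ne (Ne.symm hx),
        pderiv_X_self, hpx1, hpx0, sub_zero, zero_sub, mul_zero, zero_add]
      simp only [mul_one]
      rw [mul_neg, neg_add_eq_sub, hkey, hap, map_smul, map_mul, map_pow, haX0, haQ d]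
    · rw [hsymm i, if_neg hi]
      simp only [Derivation.add_apply, Derivation.sum_apply', Derivation.smul_apply,
        deltaA_apply, partialA_apply]
      rw [pderiv_X_of_ne hi]
      simp only [mul_zero, smul_zero, Finset.sum_const_zero, add_zero]
      by_cases hi0 : i = x0
      · rw [hi0, pderiv_X_self, mul_one, hap, haP]
      · rw [pderiv_X_of_ne hi0, mul_zero, map_zero]
  · -- ∂₀ is fixed, checked on the variable X i
    by_cases hi : i = x1
    · rw [hi, hsymm x1]
      simp only [eq_self_iff_true, if_true]
      simp only [partialA_apply]
      rw [Derivation.map_sub, pderiv_X_self, hpx1, sub_zero, mul_one, hap, map_mul,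
        map_pow, haX0, haQ 0]
    · rw [hsymm i, if_neg hi]
      simp only [partialA_apply]
      rw [pderiv_X_of_ne hi, mul_zero, map_zero]


/-- For any `μ_0, …, μ_d ∈ K` there is a `K`-algebra automorphism `ψ`
of `R = K[x_1, …, x_m]` conjugating `δ + Σ_{k=0}^d μ_k ∂_k` to `δ + μ_d ∂_d` and `∂_0`
to `∂_0`. -/
theorem stmt15 (K : Type*) [Field K] [CharZero K] (m : ℕ) (hm : 2 ≤ m)
    (α1 α2 : Fin m → ℕ) (d : ℕ) (hd : 1 ≤ d)
    (hα : ∀ j : Fin m, 2 ≤ j.val → d * α1 j ≤ α2 j)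
    (μ : ℕ → K) :
    ∃ ψ : MvPolynomial (Fin m) K ≃ₐ[K] MvPolynomial (Fin m) K,
      (∀ f : MvPolynomial (Fin m) K,
        ψ ((deltaD K m hm α1 + ∑ k ∈ Finset.range (d + 1), μ k • partialD K m hm α1 α2 k)
            (ψ.symm f)) =
          (deltaD K m hm α1 + μ d • partialD K m hm α1 α2 d) f) ∧
      (∀ f : MvPolynomial (Fin m) K,
        ψ (partialD K m hm α1 α2 0 (ψ.symm f)) = partialD K m hm α1 α2 0 f) := by
  have h := main_aux (K := K) (⟨0, by omega⟩ : Fin m) (⟨1, by omega⟩ : Fin m)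
    (Fin.ne_of_val_ne (by norm_num))
    (Finset.univ.filter (fun j : Fin m => 2 ≤ j.val))
    (by simp) (by simp) α1 α2 d hd
    (fun j hj => hα j (Finset.mem_filter.mp hj).2) μ
  exact h
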